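/- arXiv:2211.01947 — 5 statements merged into one kernel-verified Lean document; each statement's English description precedes it below -/
import Mathlib

section
/- Let k be a field, A a Hopf algebra over k with antipode S, and Λ ∈ A a right integral (i.e. Λx = ε(x)Λ for all x ∈ A). Then for every x ∈ A one has Σ Λ₍₁₎x ⊗ Λ₍₂₎ = Σ Λ₍₁₎ ⊗ Λ₍₂₎S(x) in A ⊗[k] A; that is, the images of Δ(Λ) under the linear maps (right multiplication by x) ⊗ id and id ⊗ (right multiplication by S(x)) coincide. -/
open TensorProduct Coalgebra HopfAlgebra

/-- If `Λ` is a right integral in a Hopf algebra `A` over a field `k`,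
then `Σ Λ₍₁₎x ⊗ Λ₍₂₎ = Σ Λ₍₁₎ ⊗ Λ₍₂₎S(x)` for every `x ∈ A`. -/
theorem right_integral_comul_mul_eq (k A : Type*) [Field k] [Ring A] [HopfAlgebra k A]
    (Λ : A) (hΛ : ∀ x : A, Λ * x = Coalgebra.counit (R := k) x • Λ) (x : A) :
    TensorProduct.map (LinearMap.mulRight k x) (LinearMap.id)
        (Coalgebra.comul (R := k) Λ) =
      TensorProduct.map (LinearMap.id)
        (LinearMap.mulRight k (HopfAlgebra.antipode (R := k) x))
        (Coalgebra.comul (R := k) Λ) := by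
  set S : A →ₗ[k] A := HopfAlgebra.antipode (R := k) with hS
  set T : A ⊗[k] A := Coalgebra.comul (R := k) Λ with hT
  -- rewrite the two maps as multiplication in the tensor algebra
  have h1 : ∀ (u : A ⊗[k] A) (y : A),
      TensorProduct.map (LinearMap.mulRight k y) LinearMap.id u = u * (y ⊗ₜ 1) := by
    intro u y
    induction u using TensorProduct.induction_on with
    | zero => simp
    | tmul a b => simp [Algebra.TensorProduct.tmul_mul_tmul]
    | add u v hu hv => simp [add_mul, hu, hv]
  have h2 : ∀ (u : A ⊗[k] A) (y : A),
      TensorProduct.map LinearMap.id (LinearMap.mulRight k y) u = u * (1 ⊗ₜ y) := by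
    intro u y
    induction u using TensorProduct.induction_on with
    | zero => simp
    | tmul a b => simp [Algebra.TensorProduct.tmul_mul_tmul]
    | add u v hu hv => simp [add_mul, hu, hv]
  rw [h1, h2]
  -- the right-integral property after comultiplication
  have hA : ∀ y : A, T * Coalgebra.comul (R := k) y = Coalgebra.counit (R := k) y • T := by
    intro y
    rw [hT, ← Bialgebra.comul_mul, hΛ y, map_smul]
  -- Sweedler data for x
  set rx : Coalgebra.Repr k x (A × A) := ℛ k x with hrx
  set r1 : ∀ i, Coalgebra.Repr k (rx.left i) (A × A) := fun i => ℛ k (rx.left i) with hr1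
  set r2 : ∀ i, Coalgebra.Repr k (rx.right i) (A × A) := fun i => ℛ k (rx.right i) with hr2
  -- counit identities
  have hx1 : ∑ j ∈ rx.index, Coalgebra.counit (R := k) (rx.right j) • rx.left j = x := by
    have h : (TensorProduct.rid k A)
        (∑ j ∈ rx.index, rx.left j ⊗ₜ Coalgebra.counit (R := k) (rx.right j)) =
        ∑ j ∈ rx.index, Coalgebra.counit (R := k) (rx.right j) • rx.left j := by
      rw [map_sum]; simp only [TensorProduct.rid_tmul]
    rw [← h, sum_tmul_counit_eq, TensorProduct.rid_tmul, one_smul]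
  have hx2 : ∑ j ∈ rx.index, Coalgebra.counit (R := k) (rx.left j) • rx.right j = x := by
    have h : (TensorProduct.lid k A)
        (∑ j ∈ rx.index, Coalgebra.counit (R := k) (rx.left j) ⊗ₜ rx.right j) =
        ∑ j ∈ rx.index, Coalgebra.counit (R := k) (rx.left j) • rx.right j := by
      rw [map_sum]; simp only [TensorProduct.lid_tmul]
    rw [← h, sum_counit_tmul_eq, TensorProduct.lid_tmul, one_smul]
  -- the linear map  a ⊗ (b ⊗ c) ↦ (T * (a ⊗ b)) * (1 ⊗ c)
  set φ : A ⊗[k] (A ⊗[k] A) →ₗ[k] A ⊗[k] A :=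
    (LinearMap.mul' k (A ⊗[k] A)) ∘ₗ
      (TensorProduct.map (LinearMap.mulLeft k T) ((TensorProduct.mk k A A) 1)) ∘ₗ
      (TensorProduct.assoc k A A A).symm.toLinearMap with hφ
  have hφ_apply : ∀ a b c : A, φ (a ⊗ₜ (b ⊗ₜ c)) = (T * (a ⊗ₜ b)) * (1 ⊗ₜ c) := by
    intro a b c
    simp [hφ, LinearMap.mul'_apply]
  -- coassociativity step
  have hco := Coalgebra.sum_map_tmul_tmul_eq (R := k)
    (LinearMap.id (R := k) (M := A)) (LinearMap.id (R := k) (M := A)) S x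
    (repr := rx) (a₁ := r1) (a₂ := r2)
  have hco2 := congrArg φ hco
  simp only [map_sum, hφ_apply, LinearMap.id_coe, id_eq] at hco2
  -- main chain
  calc T * (x ⊗ₜ 1)
      = ∑ j ∈ rx.index, T *
          (rx.left j ⊗ₜ (Coalgebra.counit (R := k) (rx.right j) • (1 : A))) := by
        conv_lhs => rw [← hx1]
        rw [TensorProduct.sum_tmul, Finset.mul_sum]
        refine Finset.sum_congr rfl fun j _ => ?_
        rw [TensorProduct.smul_tmul]
    _ = ∑ j ∈ rx.index, T *
          (rx.left j ⊗ₜ (∑ l ∈ (r2 j).index, (r2 j).left l * S ((r2 j).right l))) := by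
        refine Finset.sum_congr rfl fun j _ => ?_
        rw [sum_mul_antipode_eq_smul (r2 j)]
    _ = ∑ j ∈ rx.index, ∑ l ∈ (r2 j).index,
          (T * (rx.left j ⊗ₜ (r2 j).left l)) * (1 ⊗ₜ S ((r2 j).right l)) := by
        refine Finset.sum_congr rfl fun j _ => ?_
        rw [TensorProduct.tmul_sum, Finset.mul_sum]
        refine Finset.sum_congr rfl fun l _ => ?_
        rw [mul_assoc, Algebra.TensorProduct.tmul_mul_tmul, mul_one]
    _ = ∑ j ∈ rx.index, ∑ l ∈ (r1 j).index,
          (T * ((r1 j).left l ⊗ₜ (r1 j).right l)) * (1 ⊗ₜ S (rx.right j)) := hco2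
    _ = ∑ j ∈ rx.index,
          (Coalgebra.counit (R := k) (rx.left j) • T) * (1 ⊗ₜ S (rx.right j)) := by
        refine Finset.sum_congr rfl fun j _ => ?_
        rw [← Finset.sum_mul, ← Finset.mul_sum, (r1 j).eq, hA]
    _ = ∑ j ∈ rx.index,
          T * (1 ⊗ₜ S (Coalgebra.counit (R := k) (rx.left j) • rx.right j)) := by
        refine Finset.sum_congr rfl fun j _ => ?_
        rw [smul_mul_assoc, map_smul, TensorProduct.tmul_smul, mul_smul_comm]
    _ = T * (1 ⊗ₜ S x) := by
        rw [← Finset.mul_sum, ← TensorProduct.tmul_sum, ← map_sum, hx2]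
end

section
/- Let k be a field, A a Hopf algebra over k whose antipode S is bijective, and Λ ∈ A a right integral. Then for every x ∈ A one has Σ S(Λ₍₁₎) ⊗ Λ₍₂₎x = Σ xS(Λ₍₁₎) ⊗ Λ₍₂₎ in A ⊗[k] A; that is, the images of Δ(Λ) under the linear maps S ⊗ (right multiplication by x) and ((left multiplication by x) ∘ S) ⊗ id coincide. -/
open TensorProduct

section Aux

open TensorProduct Coalgebra HopfAlgebra

variable {k A : Type*} [Field k] [Ring A] [HopfAlgebra k A]

/-- The Galois-type map `a ⊗ b ↦ Σ a f(b₁) ⊗ b₂`. -/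
noncomputable def galoisMap (k : Type*) {A : Type*} [Field k] [Ring A] [HopfAlgebra k A]
    (f : A →ₗ[k] A) : A ⊗[k] A →ₗ[k] A ⊗[k] A :=
  (LinearMap.mul' k A).rTensor A ∘ₗ (TensorProduct.assoc k A A A).symm.toLinearMap ∘ₗ
    LinearMap.lTensor A ((f.rTensor A) ∘ₗ Coalgebra.comul)

lemma galoisMap_tmul (f : A →ₗ[k] A) (a b : A) (r : Coalgebra.Repr k b (A × A)) :
    galoisMap k f (a ⊗ₜ[k] b) =
      ∑ i ∈ r.index, (a * f (r.left i)) ⊗ₜ[k] r.right i := by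
  simp only [galoisMap, LinearMap.comp_apply, LinearMap.lTensor_tmul, LinearMap.coe_comp,
    Function.comp_apply, ← r.eq]
  simp [TensorProduct.tmul_sum, map_sum]

lemma master (b : A) (r : Coalgebra.Repr k b (A × A)) (g : A ⊗[k] A →ₗ[k] A) (h : A →ₗ[k] A)
    (lr : (i : r.ι) → Coalgebra.Repr k (r.left i) (A × A))
    (rr : (i : r.ι) → Coalgebra.Repr k (r.right i) (A × A)) :
    ∑ i ∈ r.index, ∑ j ∈ (rr i).index,
        g (r.left i ⊗ₜ[k] (rr i).left j) ⊗ₜ[k] h ((rr i).right j) =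
      ∑ i ∈ r.index, ∑ j ∈ (lr i).index,
        g ((lr i).left j ⊗ₜ[k] (lr i).right j) ⊗ₜ[k] h (r.right i) := by
  have := Coalgebra.sum_tmul_tmul_eq r lr rr
  apply_fun (TensorProduct.map g h ∘ₗ (TensorProduct.assoc k A A A).symm.toLinearMap) at this
  simpa [map_sum] using this.symm

lemma sum_counit_smul' (b : A) (r : Coalgebra.Repr k b (A × A)) :
    ∑ i ∈ r.index, Coalgebra.counit (R := k) (r.left i) • r.right i = b := by
  have := Coalgebra.sum_counit_tmul_eq r
  apply_fun (TensorProduct.lid k A) at this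
  simpa only [map_sum, TensorProduct.lid_tmul, one_smul] using this

lemma sum_smul_counit' (b : A) (r : Coalgebra.Repr k b (A × A)) :
    ∑ i ∈ r.index, Coalgebra.counit (R := k) (r.right i) • r.left i = b := by
  have := Coalgebra.sum_tmul_counit_eq r
  apply_fun (TensorProduct.rid k A) at this
  simpa only [map_sum, TensorProduct.rid_tmul, one_smul] using this

lemma galois_comp_eq_id :
    (galoisMap k (HopfAlgebra.antipode (R := k) (A := A))) ∘ₗ (galoisMap k LinearMap.id) =
      LinearMap.id := by
  apply TensorProduct.ext'
  intro a b
  set r := ℛ k b with hr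
  set lr : (i : r.ι) → Coalgebra.Repr k (r.left i) (A × A) := fun i => ℛ k (r.left i) with hlr
  set rr : (i : r.ι) → Coalgebra.Repr k (r.right i) (A × A) := fun i => ℛ k (r.right i) with hrr
  set S : A →ₗ[k] A := HopfAlgebra.antipode (R := k) with hSdef
  set ψ : A ⊗[k] A →ₗ[k] A :=
    (LinearMap.mulLeft k a) ∘ₗ (LinearMap.mul' k A) ∘ₗ S.lTensor A with hψ
  have key := master b r ψ LinearMap.id lr rr
  calc galoisMap k S (galoisMap k LinearMap.id (a ⊗ₜ[k] b))
      = galoisMap k S (∑ i ∈ r.index, (a * r.left i) ⊗ₜ[k] r.right i) := by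
        rw [galoisMap_tmul LinearMap.id a b r]; rfl
    _ = ∑ i ∈ r.index, ∑ j ∈ (rr i).index,
          ((a * r.left i) * S ((rr i).left j)) ⊗ₜ[k] (rr i).right j := by
        rw [map_sum]
        exact Finset.sum_congr rfl fun i _ => galoisMap_tmul S _ _ (rr i)
    _ = ∑ i ∈ r.index, ∑ j ∈ (rr i).index,
          ψ (r.left i ⊗ₜ[k] (rr i).left j) ⊗ₜ[k] LinearMap.id ((rr i).right j) := by
        simp [hψ, mul_assoc]
    _ = ∑ i ∈ r.index, ∑ j ∈ (lr i).index,
          ψ ((lr i).left j ⊗ₜ[k] (lr i).right j) ⊗ₜ[k] LinearMap.id (r.right i) := key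
    _ = ∑ i ∈ r.index, (Coalgebra.counit (R := k) (r.left i) • a) ⊗ₜ[k] r.right i := by
        refine Finset.sum_congr rfl fun i _ => ?_
        simp only [hψ, LinearMap.comp_apply, LinearMap.lTensor_tmul, LinearMap.mul'_apply,
          LinearMap.mulLeft_apply, LinearMap.id_apply]
        rw [← TensorProduct.sum_tmul, ← Finset.mul_sum,
          HopfAlgebra.sum_mul_antipode_eq_smul (lr i), mul_smul_comm, mul_one]
    _ = a ⊗ₜ[k] b := by
        simp only [TensorProduct.smul_tmul, ← TensorProduct.tmul_sum]
        rw [sum_counit_smul' b r]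

lemma galoisMap_id_tmul_mul (a b c : A) (rb : Coalgebra.Repr k b (A × A)) (rc : Coalgebra.Repr k c (A × A)) :
    galoisMap k (LinearMap.id) (a ⊗ₜ[k] (b * c)) =
      ∑ j ∈ rb.index, ∑ m ∈ rc.index,
        (a * (rb.left j * rc.left m)) ⊗ₜ[k] (rb.right j * rc.right m) := by
  simp only [galoisMap, LinearMap.comp_apply, LinearMap.lTensor_tmul]
  rw [Bialgebra.comul_mul, ← rb.eq, ← rc.eq, Finset.sum_mul_sum]
  simp [Algebra.TensorProduct.tmul_mul_tmul, TensorProduct.tmul_sum, map_sum]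

theorem right_integral_antipode_comul_eq_aux (k A : Type*) [Field k] [Ring A] [HopfAlgebra k A]
    (Λ : A) (hΛ : ∀ x : A, Λ * x = Coalgebra.counit (R := k) x • Λ) (x : A) :
    TensorProduct.map (HopfAlgebra.antipode (R := k)) (LinearMap.mulRight k x)
        (Coalgebra.comul (R := k) Λ) =
      TensorProduct.map
        ((LinearMap.mulLeft k x).comp (HopfAlgebra.antipode (R := k)))
        (LinearMap.id)
        (Coalgebra.comul (R := k) Λ) := by
  set S : A →ₗ[k] A := HopfAlgebra.antipode (R := k) with hSdef
  -- injectivity of the Galois map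
  have hli : ∀ u : A ⊗[k] A, galoisMap k S (galoisMap k (LinearMap.id : A →ₗ[k] A) u) = u :=
    fun u => by rw [← LinearMap.comp_apply, galois_comp_eq_id, LinearMap.id_apply]
  have hinj : Function.Injective (galoisMap k (LinearMap.id : A →ₗ[k] A)) :=
    Function.LeftInverse.injective hli
  set r := ℛ k Λ with hr
  set lr : (i : r.ι) → Coalgebra.Repr k (r.left i) (A × A) := fun i => ℛ k (r.left i) with hlr
  set rr : (i : r.ι) → Coalgebra.Repr k (r.right i) (A × A) := fun i => ℛ k (r.right i) with hrr
  set ξ := ℛ k x with hξ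
  rw [← r.eq]
  apply hinj
  simp only [map_sum, TensorProduct.map_tmul, LinearMap.mulRight_apply, LinearMap.comp_apply,
    LinearMap.id_apply, LinearMap.mulLeft_apply]
  -- LHS : galoisMap id (Σ S(lᵢ) ⊗ rᵢ x) = x ⊗ Λ
  have h1 : ∑ i ∈ r.index, galoisMap k (LinearMap.id : A →ₗ[k] A)
      (S (r.left i) ⊗ₜ[k] (r.right i * x)) = x ⊗ₜ[k] Λ := by
    calc ∑ i ∈ r.index, galoisMap k (LinearMap.id : A →ₗ[k] A)
          (S (r.left i) ⊗ₜ[k] (r.right i * x))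
        = ∑ i ∈ r.index, ∑ j ∈ (rr i).index, ∑ m ∈ ξ.index,
            (S (r.left i) * ((rr i).left j * ξ.left m)) ⊗ₜ[k]
              ((rr i).right j * ξ.right m) :=
          Finset.sum_congr rfl fun i _ => galoisMap_id_tmul_mul _ _ _ (rr i) ξ
      _ = ∑ m ∈ ξ.index, ∑ i ∈ r.index, ∑ j ∈ (rr i).index,
            (((LinearMap.mulRight k (ξ.left m)) ∘ₗ (LinearMap.mul' k A) ∘ₗ S.rTensor A)
              (r.left i ⊗ₜ[k] (rr i).left j)) ⊗ₜ[k]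
              ((LinearMap.mulRight k (ξ.right m)) ((rr i).right j)) := by
          rw [Finset.sum_comm]
          refine Finset.sum_congr rfl fun m _ => ?_
          rw [Finset.sum_comm]
          refine Finset.sum_congr rfl fun i _ => Finset.sum_congr rfl fun j _ => ?_
          simp [mul_assoc]
      _ = ∑ m ∈ ξ.index, ∑ i ∈ r.index, ∑ j ∈ (lr i).index,
            (((LinearMap.mulRight k (ξ.left m)) ∘ₗ (LinearMap.mul' k A) ∘ₗ S.rTensor A)
              ((lr i).left j ⊗ₜ[k] (lr i).right j)) ⊗ₜ[k]
              ((LinearMap.mulRight k (ξ.right m)) (r.right i)) :=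
          Finset.sum_congr rfl fun m _ => master Λ r _ _ lr rr
      _ = ∑ m ∈ ξ.index, ∑ i ∈ r.index,
            (Coalgebra.counit (R := k) (r.left i) • ξ.left m) ⊗ₜ[k]
              (r.right i * ξ.right m) := by
          refine Finset.sum_congr rfl fun m _ => Finset.sum_congr rfl fun i _ => ?_
          simp only [LinearMap.comp_apply, LinearMap.rTensor_tmul, LinearMap.mul'_apply,
            LinearMap.mulRight_apply]
          rw [← TensorProduct.sum_tmul, ← Finset.sum_mul,
            HopfAlgebra.sum_antipode_mul_eq_smul (lr i), smul_mul_assoc, one_mul]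
      _ = ∑ m ∈ ξ.index, ξ.left m ⊗ₜ[k] (Λ * ξ.right m) := by
          refine Finset.sum_congr rfl fun m _ => ?_
          simp only [TensorProduct.smul_tmul, ← smul_mul_assoc]
          rw [← TensorProduct.tmul_sum, ← Finset.sum_mul, sum_counit_smul' Λ r]
      _ = x ⊗ₜ[k] Λ := by
          simp only [hΛ, ← TensorProduct.smul_tmul]
          rw [← TensorProduct.sum_tmul, sum_smul_counit' x ξ]
  have h2 : ∑ i ∈ r.index, galoisMap k (LinearMap.id : A →ₗ[k] A)
      ((x * S (r.left i)) ⊗ₜ[k] r.right i) = x ⊗ₜ[k] Λ := by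
    calc ∑ i ∈ r.index, galoisMap k (LinearMap.id : A →ₗ[k] A)
          ((x * S (r.left i)) ⊗ₜ[k] r.right i)
        = ∑ i ∈ r.index, ∑ j ∈ (rr i).index,
            ((x * S (r.left i)) * (rr i).left j) ⊗ₜ[k] (rr i).right j :=
          Finset.sum_congr rfl fun i _ => galoisMap_tmul LinearMap.id _ _ (rr i)
      _ = ∑ i ∈ r.index, ∑ j ∈ (rr i).index,
            (((LinearMap.mulLeft k x) ∘ₗ (LinearMap.mul' k A) ∘ₗ S.rTensor A)
              (r.left i ⊗ₜ[k] (rr i).left j)) ⊗ₜ[k]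
              (LinearMap.id ((rr i).right j)) := by
          refine Finset.sum_congr rfl fun i _ => Finset.sum_congr rfl fun j _ => ?_
          simp [mul_assoc]
      _ = ∑ i ∈ r.index, ∑ j ∈ (lr i).index,
            (((LinearMap.mulLeft k x) ∘ₗ (LinearMap.mul' k A) ∘ₗ S.rTensor A)
              ((lr i).left j ⊗ₜ[k] (lr i).right j)) ⊗ₜ[k]
              (LinearMap.id (r.right i)) := master Λ r _ _ lr rr
      _ = ∑ i ∈ r.index, (Coalgebra.counit (R := k) (r.left i) • x) ⊗ₜ[k] r.right i := by
          refine Finset.sum_congr rfl fun i _ => ?_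
          simp only [LinearMap.comp_apply, LinearMap.rTensor_tmul, LinearMap.mul'_apply,
            LinearMap.mulLeft_apply, LinearMap.id_apply]
          rw [← TensorProduct.sum_tmul, ← Finset.mul_sum,
            HopfAlgebra.sum_antipode_mul_eq_smul (lr i), mul_smul_comm, mul_one]
      _ = x ⊗ₜ[k] Λ := by
          simp only [TensorProduct.smul_tmul, ← TensorProduct.tmul_sum]
          rw [sum_counit_smul' Λ r]
  rw [h1, h2]


end Aux

/-- If `Λ` is a right integral in a Hopf algebra `A` over a field `k`
whose antipode `S` is bijective, then
`Σ S(Λ₍₁₎) ⊗ Λ₍₂₎x = Σ xS(Λ₍₁₎) ⊗ Λ₍₂₎` for every `x ∈ A`. -/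
theorem right_integral_antipode_comul_eq (k A : Type*) [Field k] [Ring A] [HopfAlgebra k A]
    (hS : Function.Bijective (HopfAlgebra.antipode (R := k) (A := A)))
    (Λ : A) (hΛ : ∀ x : A, Λ * x = Coalgebra.counit (R := k) x • Λ) (x : A) :
    TensorProduct.map (HopfAlgebra.antipode (R := k)) (LinearMap.mulRight k x)
        (Coalgebra.comul (R := k) Λ) =
      TensorProduct.map
        ((LinearMap.mulLeft k x).comp (HopfAlgebra.antipode (R := k)))
        (LinearMap.id)
        (Coalgebra.comul (R := k) Λ) :=
  right_integral_antipode_comul_eq_aux k A Λ hΛ x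
end

section
/- Let A be a Hopf algebra over ℂ, Λ ∈ A a normalized two-sided integral, and V a nonzero finite-dimensional simple A-module. Then the trace of the linear map v ↦ Λ•v on V equals 1 if V is isomorphic as an A-module to the trivial module ℂ (on which every x ∈ A acts by multiplication by ε(x)), and equals 0 otherwise. -/
/-- The action of an element `a : A` of a `k`-algebra `A` on an `A`-module `V`
(compatible with the `k`-structure), as a `k`-linear endomorphism of `V`. -/
noncomputable def lsmulA (k A V : Type*) [CommSemiring k] [Semiring A] [Algebra k A]
    [AddCommMonoid V] [Module k V] [Module A V] [IsScalarTower k A V] (a : A) :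
    V →ₗ[k] V where
  toFun v := a • v
  map_add' := smul_add a
  map_smul' c v := by
    simp only [RingHom.id_apply, ← algebraMap_smul A c v, ← mul_smul, ← Algebra.commutes c a]
    rw [mul_smul, algebraMap_smul]

/-- Let `Λ` be a normalized two-sided integral in a Hopf algebra `A` over `ℂ`
and let `V` be a nonzero finite-dimensional simple `A`-module.  The trace of `v ↦ Λ • v` on `V`
is `1` if `V` is isomorphic as an `A`-module to the trivial module `ℂ` (on which `x` acts by
`ε(x)`), and `0` otherwise. -/
theorem trace_integral_action_simple (A V : Type*) [Ring A] [HopfAlgebra ℂ A]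
    [AddCommGroup V] [Module ℂ V] [Module A V] [IsScalarTower ℂ A V]
    [FiniteDimensional ℂ V] [IsSimpleModule A V]
    (Λ : A)
    (hL : ∀ x : A, x * Λ = Coalgebra.counit (R := ℂ) x • Λ)
    (hR : ∀ x : A, Λ * x = Coalgebra.counit (R := ℂ) x • Λ)
    (hnorm : Coalgebra.counit (R := ℂ) Λ = 1) :
    ((∃ e : V ≃ₗ[ℂ] ℂ, ∀ (x : A) (v : V), e (x • v) = Coalgebra.counit (R := ℂ) x * e v) →
        LinearMap.trace ℂ V (lsmulA ℂ A V Λ) = 1) ∧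
      (¬ (∃ e : V ≃ₗ[ℂ] ℂ, ∀ (x : A) (v : V), e (x • v) = Coalgebra.counit (R := ℂ) x * e v) →
        LinearMap.trace ℂ V (lsmulA ℂ A V Λ) = 0) := by
  have nt : Nontrivial V := IsSimpleModule.nontrivial A V
  have key : ∀ (x : A) (v : V), x • (Λ • v) = (Coalgebra.counit (R := ℂ) x) • (Λ • v) := by
    intro x v
    rw [← mul_smul, hL, smul_assoc]
  have idem : ∀ v : V, Λ • (Λ • v) = Λ • v := by
    intro v; rw [key, hnorm, one_smul]
  -- the range of the action of Λ, as an A-submodule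
  let W : Submodule A V :=
    { carrier := Set.range (fun v : V => Λ • v)
      add_mem' := by rintro _ _ ⟨a, rfl⟩ ⟨b, rfl⟩; exact ⟨a + b, smul_add Λ a b⟩
      zero_mem' := ⟨0, smul_zero Λ⟩
      smul_mem' := by
        rintro x _ ⟨v, rfl⟩
        refine ⟨(Coalgebra.counit (R := ℂ) x) • v, ?_⟩
        simp only []
        rw [smul_comm, key] }
  rcases eq_bot_or_eq_top W with hW | hW
  · -- Λ acts as 0
    have hz : ∀ v : V, Λ • v = 0 := by
      intro v
      have : Λ • v ∈ W := ⟨v, rfl⟩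
      rw [hW] at this
      exact this
    have hP : lsmulA ℂ A V Λ = 0 := by
      ext v; exact hz v
    constructor
    · rintro ⟨e, he⟩
      exfalso
      obtain ⟨v, hv⟩ := exists_ne (0 : V)
      have h1 : e (Λ • v) = e v := by rw [he, hnorm, one_mul]
      rw [hz v, map_zero] at h1
      have : e v = e 0 := by rw [map_zero]; exact h1.symm
      exact hv (e.injective this)
    · intro _
      rw [hP, map_zero]
  · -- Λ acts as identity
    have hid : ∀ v : V, Λ • v = v := by
      intro v
      have : v ∈ W := by rw [hW]; trivial
      obtain ⟨w, hw⟩ := this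
      rw [← hw]; exact idem w
    have triv : ∀ (x : A) (v : V), x • v = (Coalgebra.counit (R := ℂ) x) • v := by
      intro x v
      conv_lhs => rw [← hid v]
      rw [key, hid]
    -- V is one-dimensional
    obtain ⟨v, hv⟩ := exists_ne (0 : V)
    let S : Submodule A V :=
      { carrier := (Submodule.span ℂ {v} : Submodule ℂ V)
        add_mem' := fun ha hb => Submodule.add_mem _ ha hb
        zero_mem' := Submodule.zero_mem _
        smul_mem' := by
          intro x u hu
          rw [triv x u]
          exact Submodule.smul_mem _ _ hu }
    have hS : S = ⊤ := by
      rcases eq_bot_or_eq_top S with h | h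
      · exfalso
        have : v ∈ S := Submodule.subset_span rfl
        rw [h] at this
        exact hv this
      · exact h
    have hspan : ∀ w : V, ∃ c : ℂ, c • v = w := by
      intro w
      have : w ∈ S := by rw [hS]; trivial
      exact (Submodule.mem_span_singleton).mp this
    have hrank : Module.finrank ℂ V = 1 := finrank_eq_one v hv hspan
    have e : V ≃ₗ[ℂ] ℂ :=
      LinearEquiv.ofFinrankEq V ℂ (by rw [hrank, Module.finrank_self])
    have he : ∀ (x : A) (w : V), e (x • w) = Coalgebra.counit (R := ℂ) x * e w := by
      intro x w
      rw [triv x w, map_smul, smul_eq_mul]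
    have hPid : lsmulA ℂ A V Λ = LinearMap.id := by
      ext w; exact hid w
    have htr : LinearMap.trace ℂ V (lsmulA ℂ A V Λ) = 1 := by
      rw [hPid, LinearMap.trace_id, hrank]
      norm_num
    exact ⟨fun _ => htr, fun h => absurd ⟨e, he⟩ h⟩
end

section
/- Let A be a Hopf algebra over ℂ, Λ ∈ A a normalized two-sided integral, and V, W nonzero finite-dimensional simple A-modules. Endow Hom_ℂ(V, W) with the A-action (x·f)(v) := Σ x₍₁₎•f(S(x₍₂₎)•v). Then the trace of the linear map f ↦ Λ·f on Hom_ℂ(V, W) equals 1 if V and W are isomorphic as A-modules, and equals 0 otherwise. -/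
open TensorProduct

@[simp] lemma lsmulA_apply (k A V : Type*) [CommSemiring k] [Semiring A] [Algebra k A]
    [AddCommMonoid V] [Module k V] [Module A V] [IsScalarTower k A V] (a : A) (v : V) :
    lsmulA k A V a v = a • v := rfl

lemma lsmulA_smul_comm (k A V : Type*) [CommSemiring k] [Semiring A] [Algebra k A]
    [AddCommMonoid V] [Module k V] [Module A V] [IsScalarTower k A V] (a : A) (c : k) (v : V) :
    a • (c • v) = c • (a • v) := (lsmulA k A V a).map_smul c v

/-- Given an element `t = Σ aᵢ ⊗ bᵢ` of `A ⊗[k] A`, the `k`-linear endomorphism of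
`Hom_k(V, W)` sending `f` to `v ↦ Σ aᵢ • f (bᵢ • v)` (Sweedler-style sandwich action). -/
noncomputable def hopfSandwich (k A V W : Type*) [CommSemiring k] [Semiring A] [Algebra k A]
    [AddCommMonoid V] [Module k V] [Module A V] [IsScalarTower k A V]
    [AddCommMonoid W] [Module k W] [Module A W] [IsScalarTower k A W]
    (t : TensorProduct k A A) : (V →ₗ[k] W) →ₗ[k] (V →ₗ[k] W) :=
  TensorProduct.lift
    (LinearMap.mk₂ k
      (fun a b => (LinearMap.llcomp k V W W (lsmulA k A W a)).comp
          (LinearMap.lcomp k W (lsmulA k A V b)))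
      (fun a a' b => by
        ext f v
        simp [add_smul])
      (fun c a b => by
        ext f v
        simp [smul_assoc])
      (fun a b b' => by
        ext f v
        simp [add_smul])
      (fun c a b => by
        ext f v
        simp [smul_assoc, map_smul, lsmulA_smul_comm])) t

@[simp] lemma hopfSandwich_tmul (k A V W : Type*) [CommSemiring k] [Semiring A] [Algebra k A]
    [AddCommMonoid V] [Module k V] [Module A V] [IsScalarTower k A V]
    [AddCommMonoid W] [Module k W] [Module A W] [IsScalarTower k A W]
    (a b : A) (f : V →ₗ[k] W) (v : V) :
    hopfSandwich k A V W (a ⊗ₜ[k] b) f v = a • f (b • v) := rfl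

section HopfAux

open Coalgebra LinearMap HopfAlgebra Bialgebra

set_option maxHeartbeats 1000000
set_option synthInstance.maxHeartbeats 400000

variable {R A : Type*} [CommRing R] [Ring A] [HopfAlgebra R A]


lemma my_sum_counit_smul {ι : Type*} {a : A} (r : Coalgebra.Repr R a ι) :
    ∑ i ∈ r.index, counit (R := R) (r.left i) • r.right i = a := by
  have := congrArg (TensorProduct.lid R A) (Coalgebra.sum_counit_tmul_eq r)
  simp only [map_sum, TensorProduct.lid_tmul, one_smul] at this
  exact this

lemma my_sum_smul_counit {ι : Type*} {a : A} (r : Coalgebra.Repr R a ι) :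
    ∑ i ∈ r.index, counit (R := R) (r.right i) • r.left i = a := by
  have := congrArg (TensorProduct.rid R A) (Coalgebra.sum_tmul_counit_eq r)
  simp only [map_sum, TensorProduct.rid_tmul, one_smul] at this
  exact this

/-- Head-collapse: `∑ S(cₖ dₗ) (c'ₖ d'ₗ) = ε(x)ε(p) • 1`. -/
lemma SL1 {ι κ : Type*} {x p : A} (rc : Coalgebra.Repr R x ι) (rd : Coalgebra.Repr R p κ) :
    ∑ k ∈ rc.index, ∑ l ∈ rd.index,
      antipode (R := R) (rc.left k * rd.left l) * (rc.right k * rd.right l)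
      = (counit (R := R) x * counit (R := R) p) • (1 : A) := by
  have key : ∑ k ∈ rc.index, ∑ l ∈ rd.index,
      (rc.left k * rd.left l) ⊗ₜ[R] (rc.right k * rd.right l) = comul (R := R) (x * p) := by
    rw [comul_mul, ← rc.eq, ← rd.eq, Finset.sum_mul_sum]
    simp [Algebra.TensorProduct.tmul_mul_tmul]
  have := congrArg (LinearMap.mul' R A ∘ₗ (antipode (R := R)).rTensor A) key
  simp only [coe_comp, Function.comp_apply, map_sum, rTensor_tmul, mul'_apply] at this
  rw [this, mul_antipode_rTensor_comul_apply, counit_mul, Algebra.smul_def, mul_one]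

/-- Tail-collapse: `∑ (uₖ sₗ)(S(tₗ) S(vₖ)) = ε(y)ε(q) • 1`. -/
lemma SL2 {ι κ : Type*} {y q : A} (ru : Coalgebra.Repr R y ι) (rs : Coalgebra.Repr R q κ) :
    ∑ k ∈ ru.index, ∑ l ∈ rs.index,
      (ru.left k * rs.left l) * (antipode (R := R) (rs.right l) * antipode (R := R) (ru.right k))
      = (counit (R := R) y * counit (R := R) q) • (1 : A) := by
  have inner : ∀ k, ∑ l ∈ rs.index,
      (ru.left k * rs.left l) * (antipode (R := R) (rs.right l) * antipode (R := R) (ru.right k))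
      = counit (R := R) q • (ru.left k * antipode (R := R) (ru.right k)) := by
    intro k
    have : ∑ l ∈ rs.index, rs.left l * antipode (R := R) (rs.right l)
        = counit (R := R) q • (1 : A) := sum_mul_antipode_eq_smul rs
    calc ∑ l ∈ rs.index,
        (ru.left k * rs.left l) * (antipode (R := R) (rs.right l) * antipode (R := R) (ru.right k))
        = ru.left k * (∑ l ∈ rs.index, rs.left l * antipode (R := R) (rs.right l))
            * antipode (R := R) (ru.right k) := by
          rw [Finset.mul_sum, Finset.sum_mul]
          exact Finset.sum_congr rfl fun l _ => by noncomm_ring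
      _ = _ := by rw [this, mul_smul_comm, smul_mul_assoc, mul_one]
  rw [Finset.sum_congr rfl fun k _ => inner k, ← Finset.smul_sum, sum_mul_antipode_eq_smul ru,
    smul_smul, mul_comm]


lemma SL2' {ι κ : Type*} {y q : A} (ru : Coalgebra.Repr R y ι) (rs : Coalgebra.Repr R q κ) :
    ∑ k ∈ ru.index, ru.left k * ∑ l ∈ rs.index,
      rs.left l * (antipode (R := R) (rs.right l) * antipode (R := R) (ru.right k))
      = (counit (R := R) y * counit (R := R) q) • (1 : A) := by
  have inner : ∀ k, ∑ l ∈ rs.index,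
      rs.left l * (antipode (R := R) (rs.right l) * antipode (R := R) (ru.right k))
      = counit (R := R) q • antipode (R := R) (ru.right k) := by
    intro k
    rw [show ∀ (z : A), ∑ l ∈ rs.index, rs.left l * (antipode (R := R) (rs.right l) * z)
        = (∑ l ∈ rs.index, rs.left l * antipode (R := R) (rs.right l)) * z from
      fun z => by rw [Finset.sum_mul]; exact Finset.sum_congr rfl fun l _ => (mul_assoc _ _ _).symm,
      sum_mul_antipode_eq_smul rs, smul_mul_assoc, one_mul]
  simp only [inner, Finset.mul_sum]
  rw [show ∑ k ∈ ru.index, ru.left k * counit (R := R) q • antipode (R := R) (ru.right k)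
      = counit (R := R) q • ∑ k ∈ ru.index, ru.left k * antipode (R := R) (ru.right k) from by
    rw [Finset.smul_sum]; exact Finset.sum_congr rfl fun k _ => (mul_smul_comm _ _ _),
    sum_mul_antipode_eq_smul ru, smul_smul, mul_comm]

/-- The six-fold evaluation map `((c ⊗ c') ⊗ y) ⊗ ((d ⊗ d') ⊗ q) ↦ (S(cd)(c'd'))(S(q)S(y))`. -/
noncomputable def evMap : (((A ⊗[R] A) ⊗[R] A) ⊗[R] ((A ⊗[R] A) ⊗[R] A)) →ₗ[R] A :=
  LinearMap.mul' R A ∘ₗ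
    (TensorProduct.map
      (LinearMap.mul' R A ∘ₗ
        (TensorProduct.map ((antipode (R := R)) ∘ₗ LinearMap.mul' R A) (LinearMap.mul' R A)) ∘ₗ
        (TensorProduct.tensorTensorTensorComm R A A A A).toLinearMap)
      (LinearMap.mul' R A ∘ₗ
        (TensorProduct.map (antipode (R := R)) (antipode (R := R))) ∘ₗ
        (TensorProduct.comm R A A).toLinearMap)) ∘ₗ
    (TensorProduct.tensorTensorTensorComm R (A ⊗[R] A) A (A ⊗[R] A) A).toLinearMap

lemma evMap_tmul (c c' y d d' q : A) :
    evMap ((((c ⊗ₜ[R] c') ⊗ₜ[R] y) ⊗ₜ[R] ((d ⊗ₜ[R] d') ⊗ₜ[R] q))) =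
      (antipode (R := R) (c * d) * (c' * d')) *
        (antipode (R := R) q * antipode (R := R) y) := by
  simp [evMap, TensorProduct.tensorTensorTensorComm_tmul]

lemma double_smul_mul_cross {ι κ : Type*} (s : Finset ι) (t : Finset κ)
    (c : ι → R) (d : κ → R) (B : ι → A) (Aq : κ → A) :
    ∑ i ∈ s, ∑ j ∈ t, (c i * d j) • (Aq j * B i)
      = (∑ j ∈ t, d j • Aq j) * (∑ i ∈ s, c i • B i) := by
  conv_rhs => rw [Finset.sum_mul]
  simp only [Finset.mul_sum]
  rw [Finset.sum_comm]
  refine Finset.sum_congr rfl fun j _ => Finset.sum_congr rfl fun i _ => ?_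
  rw [smul_mul_smul_comm, mul_comm (d j) (c i)]

lemma double_smul_mul_straight {ι κ : Type*} (s : Finset ι) (t : Finset κ)
    (c : ι → R) (d : κ → R) (X : ι → A) (P : κ → A) :
    ∑ i ∈ s, ∑ j ∈ t, (c i * d j) • (X i * P j)
      = (∑ i ∈ s, c i • X i) * (∑ j ∈ t, d j • P j) := by
  conv_rhs => rw [Finset.sum_mul]
  simp only [Finset.mul_sum]
  refine Finset.sum_congr rfl fun i _ => Finset.sum_congr rfl fun j _ => ?_
  rw [smul_mul_smul_comm]

theorem my_antipode_mul (a b : A) :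
    antipode (R := R) (a * b) = antipode (R := R) b * antipode (R := R) a := by
  classical
  set ra := ℛ R a
  set rb := ℛ R b
  set Za := (comul (R := R) (A := A)).rTensor A (comul a) with hZa
  set Zb := (comul (R := R) (A := A)).rTensor A (comul b) with hZb
  have ZaR : Za = ∑ i ∈ ra.index, ∑ k ∈ (ℛ R (ra.left i)).index,
      (((ℛ R (ra.left i)).left k ⊗ₜ[R] (ℛ R (ra.left i)).right k) ⊗ₜ[R] ra.right i) := by
    rw [hZa, ← ra.eq, map_sum]
    refine Finset.sum_congr rfl fun i _ => ?_
    rw [rTensor_tmul, ← (ℛ R (ra.left i)).eq, sum_tmul]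
  have ZbR : Zb = ∑ j ∈ rb.index, ∑ l ∈ (ℛ R (rb.left j)).index,
      (((ℛ R (rb.left j)).left l ⊗ₜ[R] (ℛ R (rb.left j)).right l) ⊗ₜ[R] rb.right j) := by
    rw [hZb, ← rb.eq, map_sum]
    refine Finset.sum_congr rfl fun j _ => ?_
    rw [rTensor_tmul, ← (ℛ R (rb.left j)).eq, sum_tmul]
  have ZaL : Za = ∑ i ∈ ra.index, ∑ k ∈ (ℛ R (ra.right i)).index,
      ((ra.left i ⊗ₜ[R] (ℛ R (ra.right i)).left k) ⊗ₜ[R] (ℛ R (ra.right i)).right k) := by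
    rw [hZa, ← coassoc_symm_apply, ← ra.eq, map_sum, map_sum]
    refine Finset.sum_congr rfl fun i _ => ?_
    rw [lTensor_tmul, ← (ℛ R (ra.right i)).eq, tmul_sum, map_sum]
    exact Finset.sum_congr rfl fun k _ => by rw [TensorProduct.assoc_symm_tmul]
  have ZbL : Zb = ∑ j ∈ rb.index, ∑ l ∈ (ℛ R (rb.right j)).index,
      ((rb.left j ⊗ₜ[R] (ℛ R (rb.right j)).left l) ⊗ₜ[R] (ℛ R (rb.right j)).right l) := by
    rw [hZb, ← coassoc_symm_apply, ← rb.eq, map_sum, map_sum]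
    refine Finset.sum_congr rfl fun j _ => ?_
    rw [lTensor_tmul, ← (ℛ R (rb.right j)).eq, tmul_sum, map_sum]
    exact Finset.sum_congr rfl fun l _ => by rw [TensorProduct.assoc_symm_tmul]
  have key1 : evMap (R := R) (A := A) (Za ⊗ₜ[R] Zb)
      = antipode (R := R) b * antipode (R := R) a := by
    rw [ZaR, ZbR]
    simp only [sum_tmul, tmul_sum, map_sum, evMap_tmul]
    have reorder : ∀ j ∈ rb.index, ∑ l ∈ (ℛ R (rb.left j)).index, ∑ i ∈ ra.index,
        ∑ k ∈ (ℛ R (ra.left i)).index,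
        (antipode (R := R) ((ℛ R (ra.left i)).left k * (ℛ R (rb.left j)).left l) *
            ((ℛ R (ra.left i)).right k * (ℛ R (rb.left j)).right l)) *
          (antipode (R := R) (rb.right j) * antipode (R := R) (ra.right i))
        = ∑ i ∈ ra.index,
            (counit (R := R) (ra.left i) * counit (R := R) (rb.left j)) •
              (antipode (R := R) (rb.right j) * antipode (R := R) (ra.right i)) := by
      intro j _
      rw [Finset.sum_comm]
      refine Finset.sum_congr rfl fun i _ => ?_
      rw [Finset.sum_comm]
      simp only [← Finset.sum_mul]
      rw [SL1 (ℛ R (ra.left i)) (ℛ R (rb.left j)), smul_mul_assoc, one_mul]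
    rw [Finset.sum_congr rfl reorder]
    have hstraight := double_smul_mul_straight (R := R) (A := A) rb.index ra.index
      (fun j => counit (R := R) (rb.left j)) (fun i => counit (R := R) (ra.left i))
      (fun j => antipode (R := R) (rb.right j)) (fun i => antipode (R := R) (ra.right i))
    rw [Finset.sum_congr rfl fun j _ => Finset.sum_congr rfl fun i _ => by
      rw [mul_comm (counit (R := R) (ra.left i)) (counit (R := R) (rb.left j))], hstraight]
    simp only [← map_smul, ← map_sum, my_sum_counit_smul]
  have key2 : evMap (R := R) (A := A) (Za ⊗ₜ[R] Zb)
      = antipode (R := R) (a * b) := by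
    rw [ZaL, ZbL]
    simp only [sum_tmul, tmul_sum, map_sum, evMap_tmul]
    have reorder : ∀ j ∈ rb.index, ∑ l ∈ (ℛ R (rb.right j)).index, ∑ i ∈ ra.index,
        ∑ k ∈ (ℛ R (ra.right i)).index,
        (antipode (R := R) (ra.left i * rb.left j) *
            ((ℛ R (ra.right i)).left k * (ℛ R (rb.right j)).left l)) *
          (antipode (R := R) ((ℛ R (rb.right j)).right l) *
            antipode (R := R) ((ℛ R (ra.right i)).right k))
        = ∑ i ∈ ra.index,
            (counit (R := R) (ra.right i) * counit (R := R) (rb.right j)) •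
              antipode (R := R) (ra.left i * rb.left j) := by
      intro j _
      rw [Finset.sum_comm]
      refine Finset.sum_congr rfl fun i _ => ?_
      rw [Finset.sum_comm]
      simp only [mul_assoc, ← Finset.mul_sum]
      rw [SL2' (ℛ R (ra.right i)) (ℛ R (rb.right j)), mul_smul_comm, mul_one]
    rw [Finset.sum_congr rfl reorder]
    rw [Finset.sum_congr rfl fun j _ => Finset.sum_congr rfl fun i _ => by
      rw [mul_comm (counit (R := R) (ra.right i)) (counit (R := R) (rb.right j))]]
    simp only [← map_smul (antipode (R := R) (A := A)), ← map_sum]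
    rw [double_smul_mul_cross (R := R) (A := A) rb.index ra.index
      (fun j => counit (R := R) (rb.right j)) (fun i => counit (R := R) (ra.right i))
      (fun j => rb.left j) (fun i => ra.left i),
      my_sum_smul_counit, my_sum_smul_counit]
  rw [← key2, key1]

/-- `u ⊗ v`-indexed sandwich: `(a ⊗ b) ↦ (t ↦ (a ⊗ 1) * t * (1 ⊗ b))`. -/
noncomputable def sandwichL : (A ⊗[R] A) →ₗ[R] (A ⊗[R] A) →ₗ[R] (A ⊗[R] A) :=
  TensorProduct.lift (LinearMap.mk₂ R
    (fun a b => (LinearMap.mulRight R ((1:A) ⊗ₜ[R] b)) ∘ₗ (LinearMap.mulLeft R (a ⊗ₜ[R] (1:A))))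
    (fun a a' b => by ext t; simp [add_tmul, add_mul])
    (fun c a b => by ext t; simp [smul_tmul', smul_mul_assoc])
    (fun a b b' => by ext t; simp [tmul_add, mul_add])
    (fun c a b => by ext t; simp [smul_tmul, tmul_smul, mul_smul_comm]))

@[simp] lemma sandwichL_tmul (a b : A) (t : A ⊗[R] A) :
    sandwichL (a ⊗ₜ[R] b) t = (a ⊗ₜ[R] (1:A)) * t * ((1:A) ⊗ₜ[R] b) := rfl

lemma L3 (t : A ⊗[R] A) (z : A) :
    (LinearMap.mulRight R z).lTensor A t = t * ((1:A) ⊗ₜ[R] z) := by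
  induction t using TensorProduct.induction_on with
  | zero => simp
  | tmul a b => simp [Algebra.TensorProduct.tmul_mul_tmul]
  | add u v hu hv => rw [map_add, add_mul, hu, hv]

lemma L1 (z : A) (u t : A ⊗[R] A) :
    (((LinearMap.mulRight R z) ∘ₗ antipode (R := R)).lTensor A) (u * t)
      = sandwichL ((((LinearMap.mulRight R z) ∘ₗ antipode (R := R)).lTensor A) u)
          ((antipode (R := R)).lTensor A t) := by
  induction u using TensorProduct.induction_on with
  | zero => simp
  | add u v hu hv => rw [add_mul, map_add, map_add, hu, hv, map_add, LinearMap.add_apply]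
  | tmul a b =>
    induction t using TensorProduct.induction_on with
    | zero => simp
    | add s s' hs hs' => rw [mul_add, map_add, hs, hs', map_add, map_add]
    | tmul c d =>
      simp only [Algebra.TensorProduct.tmul_mul_tmul, lTensor_tmul, coe_comp,
        Function.comp_apply, mulRight_apply, sandwichL_tmul]
      rw [my_antipode_mul]
      simp [Algebra.TensorProduct.tmul_mul_tmul, mul_assoc]

lemma L2 (x : A) :
    ∑ i ∈ (ℛ R x).index,
      (((LinearMap.mulRight R ((ℛ R x).right i)) ∘ₗ antipode (R := R)).lTensor A)
        (comul ((ℛ R x).left i)) = x ⊗ₜ[R] (1:A) := by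
  set F := ((LinearMap.mul' R A ∘ₗ (antipode (R := R)).rTensor A).lTensor A) ∘ₗ
    (TensorProduct.assoc R A A A).toLinearMap with hF
  have sub : ∀ (w : A ⊗[R] A) (z : A),
      F (w ⊗ₜ[R] z) = (((LinearMap.mulRight R z) ∘ₗ antipode (R := R)).lTensor A) w := by
    intro w z
    induction w using TensorProduct.induction_on with
    | zero => rw [zero_tmul, map_zero, map_zero]
    | add u v hu hv => rw [add_tmul, map_add, hu, hv, map_add]
    | tmul a b => simp [hF]
  have h2 : ∑ i ∈ (ℛ R x).index,
      (((LinearMap.mulRight R ((ℛ R x).right i)) ∘ₗ antipode (R := R)).lTensor A)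
        (comul ((ℛ R x).left i))
      = F ((comul (R := R)).rTensor A (comul x)) := by
    conv_rhs => rw [← (ℛ R x).eq]
    rw [map_sum, map_sum]
    exact Finset.sum_congr rfl fun i _ => by rw [rTensor_tmul, sub]
  have h4 : F ((comul (R := R)).rTensor A (comul x))
      = ((Algebra.linearMap R A ∘ₗ counit (R := R)).lTensor A) (comul x) := by
    have : F ((comul (R := R)).rTensor A (comul x))
        = ((LinearMap.mul' R A ∘ₗ (antipode (R := R)).rTensor A).lTensor A)
            ((TensorProduct.assoc R A A A) ((comul (R := R)).rTensor A (comul x))) := rfl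
    rw [this, coassoc_apply, ← lTensor_comp_apply, LinearMap.comp_assoc,
      mul_antipode_rTensor_comul]
  rw [h2, h4]
  conv_lhs => rw [← (ℛ R x).eq]
  rw [map_sum]
  have h3 : ∀ i, ((Algebra.linearMap R A ∘ₗ counit (R := R)).lTensor A)
      (((ℛ R x).left i) ⊗ₜ[R] ((ℛ R x).right i))
      = (counit (R := R) ((ℛ R x).right i)) • (((ℛ R x).left i) ⊗ₜ[R] (1:A)) := by
    intro i
    rw [lTensor_tmul]
    simp [Algebra.algebraMap_eq_smul_one, tmul_smul]
  rw [Finset.sum_congr rfl fun i _ => h3 i]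
  rw [show ∑ i ∈ (ℛ R x).index,
      (counit (R := R) ((ℛ R x).right i)) • (((ℛ R x).left i) ⊗ₜ[R] (1:A))
      = (∑ i ∈ (ℛ R x).index, counit (R := R) ((ℛ R x).right i) • (ℛ R x).left i) ⊗ₜ[R] (1:A) from by
    rw [sum_tmul]
    exact Finset.sum_congr rfl fun i _ => by rw [smul_tmul'],
    my_sum_smul_counit]

theorem key_id (L : A) (hL : ∀ x : A, x * L = counit (R := R) x • L) (x : A) :
    (x ⊗ₜ[R] (1:A)) * ((antipode (R := R)).lTensor A (comul (R := R) L))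
      = ((antipode (R := R)).lTensor A (comul (R := R) L)) * ((1:A) ⊗ₜ[R] x) := by
  set T := (antipode (R := R)).lTensor A (comul (R := R) L) with hT
  set rx := ℛ R x with hrx
  -- The pivot element
  set E := ∑ i ∈ rx.index,
    (((LinearMap.mulRight R (rx.right i)) ∘ₗ antipode (R := R)).lTensor A)
      (comul (R := R) (rx.left i) * comul (R := R) L) with hE
  have eval1 : E = T * ((1:A) ⊗ₜ[R] x) := by
    have comm : ∀ i, comul (R := R) (rx.left i) * comul (R := R) L = counit (R := R) (rx.left i) • comul (R := R) L := by
      intro i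
      rw [← comul_mul, hL, map_smul]
    have step : ∀ i, (((LinearMap.mulRight R (rx.right i)) ∘ₗ antipode (R := R)).lTensor A)
        (comul (R := R) (rx.left i) * comul (R := R) L)
        = counit (R := R) (rx.left i) • (T * ((1:A) ⊗ₜ[R] rx.right i)) := by
      intro i
      rw [comm i, map_smul, lTensor_comp, LinearMap.comp_apply, ← hT, L3]
    rw [hE, Finset.sum_congr rfl fun i _ => step i]
    have : ∀ i, counit (R := R) (rx.left i) • (T * ((1:A) ⊗ₜ[R] rx.right i))
        = T * ((1:A) ⊗ₜ[R] (counit (R := R) (rx.left i) • rx.right i)) := by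
      intro i
      rw [tmul_smul, mul_smul_comm]
    rw [Finset.sum_congr rfl fun i _ => this i, ← Finset.mul_sum, ← tmul_sum,
      my_sum_counit_smul]
  have eval2 : E = (x ⊗ₜ[R] (1:A)) * T := by
    rw [hE, Finset.sum_congr rfl fun i _ => L1 (rx.right i) (comul (R := R) (rx.left i)) (comul (R := R) L)]
    rw [← hT]
    rw [show ∑ i ∈ rx.index, sandwichL
        ((((LinearMap.mulRight R (rx.right i)) ∘ₗ antipode (R := R)).lTensor A)
          (comul (R := R) (rx.left i))) T
        = sandwichL (∑ i ∈ rx.index,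
            (((LinearMap.mulRight R (rx.right i)) ∘ₗ antipode (R := R)).lTensor A)
              (comul (R := R) (rx.left i))) T from by
      rw [map_sum, LinearMap.sum_apply]]
    rw [hrx, L2, sandwichL_tmul, ← Algebra.TensorProduct.one_def, mul_one]
  rw [← eval1, ← eval2]

end HopfAux

section ModuleAux

open Coalgebra LinearMap HopfAlgebra Bialgebra

variable (k A V W : Type*) [CommRing k] [Ring A] [HopfAlgebra k A]
    [AddCommGroup V] [Module k V] [Module A V] [IsScalarTower k A V]
    [AddCommGroup W] [Module k W] [Module A W] [IsScalarTower k A W]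

lemma hopfSandwich_zero : hopfSandwich k A V W 0 = 0 := by
  simp only [hopfSandwich]; exact map_zero _

lemma hopfSandwich_add (u u' : TensorProduct k A A) :
    hopfSandwich k A V W (u + u') = hopfSandwich k A V W u + hopfSandwich k A V W u' := by
  simp only [hopfSandwich]; exact map_add _ u u'

lemma hopfSandwich_mulLeft (t : TensorProduct k A A) (x : A) (f : V →ₗ[k] W) (v : V) :
    hopfSandwich k A V W ((x ⊗ₜ[k] (1:A)) * t) f v = x • hopfSandwich k A V W t f v := by
  induction t using TensorProduct.induction_on with
  | zero => simp [hopfSandwich_zero]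
  | add u u' hu hu' =>
    rw [mul_add, hopfSandwich_add, hopfSandwich_add, LinearMap.add_apply, LinearMap.add_apply,
      LinearMap.add_apply, LinearMap.add_apply, hu, hu', smul_add]
  | tmul a b =>
    rw [Algebra.TensorProduct.tmul_mul_tmul, one_mul]
    simp only [hopfSandwich_tmul]
    rw [mul_smul]

lemma hopfSandwich_mulRight (t : TensorProduct k A A) (x : A) (f : V →ₗ[k] W) (v : V) :
    hopfSandwich k A V W (t * ((1:A) ⊗ₜ[k] x)) f v = hopfSandwich k A V W t f (x • v) := by
  induction t using TensorProduct.induction_on with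
  | zero => simp [hopfSandwich_zero]
  | add u u' hu hu' =>
    rw [add_mul, hopfSandwich_add, hopfSandwich_add, LinearMap.add_apply, LinearMap.add_apply,
      LinearMap.add_apply, LinearMap.add_apply, hu, hu']
  | tmul a b =>
    rw [Algebra.TensorProduct.tmul_mul_tmul, mul_one]
    simp only [hopfSandwich_tmul]
    rw [mul_smul]

lemma hopfSandwich_equivariant (t : TensorProduct k A A) (f : V →ₗ[k] W)
    (hf : ∀ (x : A) (v : V), f (x • v) = x • f v) (v : V) :
    hopfSandwich k A V W t f v = (LinearMap.mul' k A t) • f v := by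
  induction t using TensorProduct.induction_on with
  | zero => simp [hopfSandwich_zero]
  | add u u' hu hu' =>
    rw [hopfSandwich_add, LinearMap.add_apply, LinearMap.add_apply, hu, hu', map_add, add_smul]
  | tmul a b => simp only [hopfSandwich_tmul, mul'_apply]; rw [hf, mul_smul]

/-- The `k`-submodule of `A`-equivariant maps in `Hom_k(V,W)`. -/
def homA : Submodule k (V →ₗ[k] W) where
  carrier := {f | ∀ (x : A) (v : V), f (x • v) = x • f v}
  add_mem' := fun {f} {g} hf hg x v => by simp [hf x v, hg x v, smul_add]
  zero_mem' := fun x v => by simp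
  smul_mem' := fun c {f} hf x v => by
    simp only [LinearMap.smul_apply, hf x v]
    exact (lsmulA_smul_comm k A W x c (f v)).symm

variable {k A V W}

lemma isProj_hopfSandwich (L : A) (hL : ∀ x : A, x * L = counit (R := k) x • L)
    (hnorm : counit (R := k) L = 1) :
    LinearMap.IsProj (homA k A V W)
      (hopfSandwich k A V W
        (TensorProduct.map LinearMap.id (antipode (R := k)) (comul (R := k) L))) := by
  have hlT : TensorProduct.map LinearMap.id (antipode (R := k)) (comul (R := k) L)
      = (antipode (R := k)).lTensor A (comul (R := k) L) := rfl
  constructor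
  · -- maps into equivariant maps
    intro f x v
    rw [hlT, ← hopfSandwich_mulRight, ← key_id L hL x, hopfSandwich_mulLeft]
  · -- fixes equivariant maps
    intro f hf
    ext v
    rw [hlT, hopfSandwich_equivariant k A V W _ f hf, mul_antipode_lTensor_comul_apply, hnorm,
      map_one, one_smul]

end ModuleAux

/-- Let `Λ` be a normalized two-sided integral in a Hopf algebra `A` over `ℂ`
and let `V, W` be nonzero finite-dimensional simple `A`-modules.  With the action
`(x·f)(v) = Σ x₍₁₎ • f (S(x₍₂₎) • v)` on `Hom_ℂ(V, W)`, the trace of `f ↦ Λ·f` equals `1`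
if `V ≅ W` as `A`-modules, and `0` otherwise. -/
theorem trace_integral_hom_action (A V W : Type*) [Ring A] [HopfAlgebra ℂ A]
    [AddCommGroup V] [Module ℂ V] [Module A V] [IsScalarTower ℂ A V]
    [AddCommGroup W] [Module ℂ W] [Module A W] [IsScalarTower ℂ A W]
    [FiniteDimensional ℂ V] [IsSimpleModule A V]
    [FiniteDimensional ℂ W] [IsSimpleModule A W]
    (Λ : A)
    (hL : ∀ x : A, x * Λ = Coalgebra.counit (R := ℂ) x • Λ)
    (hR : ∀ x : A, Λ * x = Coalgebra.counit (R := ℂ) x • Λ)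
    (hnorm : Coalgebra.counit (R := ℂ) Λ = 1) :
    ((∃ e : V ≃ₗ[ℂ] W, ∀ (x : A) (v : V), e (x • v) = x • e v) →
        LinearMap.trace ℂ (V →ₗ[ℂ] W)
          (hopfSandwich ℂ A V W
            (TensorProduct.map LinearMap.id (HopfAlgebra.antipode (R := ℂ))
              (Coalgebra.comul (R := ℂ) Λ))) = 1) ∧
      (¬ (∃ e : V ≃ₗ[ℂ] W, ∀ (x : A) (v : V), e (x • v) = x • e v) →
        LinearMap.trace ℂ (V →ₗ[ℂ] W)
          (hopfSandwich ℂ A V W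
            (TensorProduct.map LinearMap.id (HopfAlgebra.antipode (R := ℂ))
              (Coalgebra.comul (R := ℂ) Λ))) = 0) := by
  classical
  have hproj : LinearMap.IsProj (homA ℂ A V W)
      (hopfSandwich ℂ A V W
        (TensorProduct.map LinearMap.id (HopfAlgebra.antipode (R := ℂ))
          (Coalgebra.comul (R := ℂ) Λ))) := isProj_hopfSandwich Λ hL hnorm
  have htrace : LinearMap.trace ℂ (V →ₗ[ℂ] W)
      (hopfSandwich ℂ A V W
        (TensorProduct.map LinearMap.id (HopfAlgebra.antipode (R := ℂ))
          (Coalgebra.comul (R := ℂ) Λ)))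
      = (Module.finrank ℂ (homA ℂ A V W) : ℂ) := hproj.trace
  have hVnt : Nontrivial V := IsSimpleModule.nontrivial A V
  constructor
  · rintro ⟨e, he⟩
    have he' : (e : V →ₗ[ℂ] W) ∈ homA ℂ A V W := fun x v => he x v
    have hne : (e : V →ₗ[ℂ] W) ≠ 0 := by
      intro h0
      obtain ⟨v, hv⟩ := exists_ne (0 : V)
      apply hv
      apply e.injective
      rw [map_zero, show e v = (e : V →ₗ[ℂ] W) v from rfl, h0]
      rfl
    have hesymm : ∀ (x : A) (w : W), e.symm (x • w) = x • e.symm w := by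
      intro x w
      apply e.injective
      rw [he, e.apply_symm_apply, e.apply_symm_apply]
    have hspan : homA ℂ A V W = ℂ ∙ (e : V →ₗ[ℂ] W) := by
      refine le_antisymm ?_ ((Submodule.span_singleton_le_iff_mem _ _).mpr he')
      intro f hf
      set φ : Module.End ℂ V := (e.symm : W →ₗ[ℂ] V) ∘ₗ f with hφdef
      have hφ : ∀ (x : A) (v : V), φ (x • v) = x • φ v := by
        intro x v
        simp only [hφdef, LinearMap.comp_apply, LinearEquiv.coe_coe]
        rw [hf x v, hesymm]
      obtain ⟨μ, hμ⟩ := Module.End.exists_eigenvalue φ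
      set pA : Submodule A V :=
        { carrier := (Module.End.eigenspace φ μ : Set V)
          add_mem' := fun ha hb => (Module.End.eigenspace φ μ).add_mem ha hb
          zero_mem' := (Module.End.eigenspace φ μ).zero_mem
          smul_mem' := by
            intro x v hv
            have hv' : φ v = μ • v := Module.End.mem_eigenspace_iff.mp hv
            refine Module.End.mem_eigenspace_iff.mpr ?_
            rw [hφ, hv', lsmulA_smul_comm ℂ A V x μ v] } with hpA
      have hpA_ne : pA ≠ ⊥ := by
        intro h0
        apply hμ
        rw [Submodule.eq_bot_iff]
        intro v hv
        have : v ∈ pA := hv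
        rw [h0] at this
        exact this
      have hpA_top : pA = ⊤ := (eq_bot_or_eq_top pA).resolve_left hpA_ne
      have hφ_eq : ∀ v : V, φ v = μ • v := by
        intro v
        have : v ∈ pA := by rw [hpA_top]; trivial
        exact Module.End.mem_eigenspace_iff.mp this
      refine (Submodule.mem_span_singleton).mpr ⟨μ, ?_⟩
      ext v
      have : f v = e (φ v) := by
        simp only [hφdef, LinearMap.comp_apply, LinearEquiv.coe_coe, e.apply_symm_apply]
      rw [LinearMap.smul_apply, this, hφ_eq, map_smul]
      rfl
    rw [htrace, hspan, finrank_span_singleton hne]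
    norm_num
  · intro hniso
    have h0 : homA ℂ A V W = ⊥ := by
      rw [Submodule.eq_bot_iff]
      intro f hf
      by_contra hfne
      set kerA : Submodule A V :=
        { carrier := (LinearMap.ker f : Set V)
          add_mem' := fun ha hb => (LinearMap.ker f).add_mem ha hb
          zero_mem' := (LinearMap.ker f).zero_mem
          smul_mem' := by
            intro x v hv
            have hv' : f v = 0 := LinearMap.mem_ker.mp hv
            refine LinearMap.mem_ker.mpr ?_
            rw [hf x v, hv', smul_zero] } with hkerA
      have hker_bot : kerA = ⊥ := by
        refine (eq_bot_or_eq_top kerA).resolve_right ?_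
        intro htop
        apply hfne
        ext v
        have : v ∈ kerA := by rw [htop]; trivial
        simp only [LinearMap.zero_apply]
        exact this
      have hinj : Function.Injective f := by
        rw [← LinearMap.ker_eq_bot]
        rw [Submodule.eq_bot_iff]
        intro v hv
        have : v ∈ kerA := hv
        rw [hker_bot] at this
        simpa using this
      set rangeA : Submodule A W :=
        { carrier := (LinearMap.range f : Set W)
          add_mem' := fun ha hb => (LinearMap.range f).add_mem ha hb
          zero_mem' := (LinearMap.range f).zero_mem
          smul_mem' := by
            rintro x w ⟨v, rfl⟩
            exact ⟨x • v, hf x v⟩ } with hrangeA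
      have hrange_top : rangeA = ⊤ := by
        refine (eq_bot_or_eq_top rangeA).resolve_left ?_
        intro hbot
        apply hfne
        ext v
        have : f v ∈ rangeA := ⟨v, rfl⟩
        rw [hbot] at this
        simp only [LinearMap.zero_apply]
        simpa using this
      have hsurj : Function.Surjective f := by
        intro w
        have : w ∈ rangeA := by rw [hrange_top]; trivial
        exact this
      exact hniso ⟨LinearEquiv.ofBijective f ⟨hinj, hsurj⟩, fun x v => hf x v⟩
    rw [htrace, h0, finrank_bot]
    norm_num
end

section
/- Let G be a finite group and ρ : G → GL(n, ℂ) a matrix representation whose associated representation on ℂⁿ is irreducible. Then for all indices i, j, k, l ∈ {1, …, n}: (1/|G|) Σ_{g ∈ G} ρ(g⁻¹)_{j i} ρ(g)_{k l} = (1/n) δ_{i k} δ_{j l}. -/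
/-- For an irreducible matrix representation `ρ : G → GL(n, ℂ)` of a finite
group `G`: `(1/|G|) Σ_g ρ(g⁻¹)_{ji} ρ(g)_{kl} = (1/n) δ_{ik} δ_{jl}`. -/
theorem matrix_schur_orthogonality_same (G : Type*) [Group G] [Fintype G] (n : ℕ)
    (ρ : G →* Matrix.GeneralLinearGroup (Fin n) ℂ)
    (hirr : ∀ U : Submodule ℂ (Fin n → ℂ),
      (∀ (g : G) (v : Fin n → ℂ), v ∈ U →
        ((ρ g : Matrix (Fin n) (Fin n) ℂ)).mulVec v ∈ U) → U = ⊥ ∨ U = ⊤)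
    (i j k l : Fin n) :
    (Fintype.card G : ℂ)⁻¹ *
        ∑ g : G, (ρ g⁻¹ : Matrix (Fin n) (Fin n) ℂ) j i *
          (ρ g : Matrix (Fin n) (Fin n) ℂ) k l =
      (n : ℂ)⁻¹ * (if i = k then 1 else 0) * (if j = l then 1 else 0) := by
  rcases Nat.eq_zero_or_pos n with hn | hn
  · exact absurd i.isLt (by omega)
  haveI : NeZero n := ⟨hn.ne'⟩
  set E : Matrix (Fin n) (Fin n) ℂ := Matrix.single i k 1 with hE
  set M : Matrix (Fin n) (Fin n) ℂ :=
    ∑ g : G, (ρ g⁻¹ : Matrix (Fin n) (Fin n) ℂ) * E * (ρ g : Matrix (Fin n) (Fin n) ℂ)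
    with hM
  -- M commutes with all ρ h
  have hcomm : ∀ h : G, M * (ρ h : Matrix (Fin n) (Fin n) ℂ) =
      (ρ h : Matrix (Fin n) (Fin n) ℂ) * M := by
    intro h
    have key := (Equiv.sum_comp (Equiv.mulRight h⁻¹)
      (fun g : G => (ρ g⁻¹ : Matrix (Fin n) (Fin n) ℂ) * E *
        (ρ (g * h) : Matrix (Fin n) (Fin n) ℂ))).symm
    simp only [Equiv.coe_mulRight, mul_inv_rev, inv_inv, inv_mul_cancel_right] at key
    calc M * (ρ h : Matrix (Fin n) (Fin n) ℂ)
        = ∑ g : G, (ρ g⁻¹ : Matrix (Fin n) (Fin n) ℂ) * E *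
            (ρ (g * h) : Matrix (Fin n) (Fin n) ℂ) := by
          rw [hM, Finset.sum_mul]
          refine Finset.sum_congr rfl fun g _ => ?_
          rw [map_mul, Units.val_mul, mul_assoc]
      _ = ∑ g : G, (ρ (h * g⁻¹) : Matrix (Fin n) (Fin n) ℂ) * E *
            (ρ g : Matrix (Fin n) (Fin n) ℂ) := key
      _ = (ρ h : Matrix (Fin n) (Fin n) ℂ) * M := by
          rw [hM, Finset.mul_sum]
          refine Finset.sum_congr rfl fun g _ => ?_
          simp only [map_mul, Units.val_mul, mul_assoc]
  -- Schur: M is a scalar matrix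
  obtain ⟨μ, hμ⟩ := Module.End.exists_eigenvalue (Matrix.toLin' M)
  set U := Module.End.eigenspace (Matrix.toLin' M) μ with hU
  have hinv : ∀ (g : G) (v : Fin n → ℂ), v ∈ U →
      ((ρ g : Matrix (Fin n) (Fin n) ℂ)).mulVec v ∈ U := by
    intro g v hv
    have hv' : M.mulVec v = μ • v := by
      rw [hU, Module.End.mem_eigenspace_iff] at hv
      simpa [Matrix.toLin'_apply] using hv
    rw [hU, Module.End.mem_eigenspace_iff]
    simp only [Matrix.toLin'_apply, Matrix.mulVec_mulVec]
    rw [hcomm g, ← Matrix.mulVec_mulVec, hv', Matrix.mulVec_smul]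
  have hUtop : U = ⊤ := (hirr U hinv).resolve_left hμ
  have hMscalar : M = μ • (1 : Matrix (Fin n) (Fin n) ℂ) := by
    ext a b
    have hv : (Pi.single b 1 : Fin n → ℂ) ∈ U := hUtop ▸ Submodule.mem_top
    rw [hU, Module.End.mem_eigenspace_iff] at hv
    have := congrFun hv a
    simpa [Matrix.toLin'_apply, Matrix.mulVec_single, Matrix.one_apply, Pi.single_apply,
      mul_comm] using this
  -- compute trace of M
  have htrE : E.trace = if i = k then 1 else 0 := by
    rw [hE, Matrix.trace]
    rcases eq_or_ne i k with rfl | h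
    · rw [if_pos rfl]
      simp [Matrix.diag, Matrix.single, Finset.sum_ite_eq, Finset.sum_ite_eq']
    · rw [if_neg h]
      refine Finset.sum_eq_zero fun x _ => ?_
      simp only [Matrix.diag_apply, Matrix.single, Matrix.of_apply]
      rw [if_neg]
      rintro ⟨rfl, rfl⟩
      exact h rfl
  have htr : Matrix.trace M = (Fintype.card G : ℂ) * (if i = k then 1 else 0) := by
    rw [hM, Matrix.trace_sum]
    have hterm : ∀ g : G, Matrix.trace ((ρ g⁻¹ : Matrix (Fin n) (Fin n) ℂ) * E *
        (ρ g : Matrix (Fin n) (Fin n) ℂ)) = (if i = k then 1 else 0) := by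
      intro g
      rw [Matrix.trace_mul_cycle, ← Units.val_mul, ← map_mul, mul_inv_cancel, map_one,
        Units.val_one, one_mul, htrE]
    rw [Finset.sum_congr rfl fun g _ => hterm g, Finset.sum_const, Finset.card_univ,
      nsmul_eq_mul]
  have htr' : Matrix.trace M = μ * n := by
    rw [hMscalar]
    simp [Matrix.trace_smul, Matrix.trace_one, mul_comm]
  have hμval : μ * n = (Fintype.card G : ℂ) * (if i = k then 1 else 0) := by
    rw [← htr', htr]
  -- the LHS sum is M j l
  have hMjl : M j l = ∑ g : G, (ρ g⁻¹ : Matrix (Fin n) (Fin n) ℂ) j i *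
      (ρ g : Matrix (Fin n) (Fin n) ℂ) k l := by
    rw [hM, Matrix.sum_apply]
    refine Finset.sum_congr rfl fun g _ => ?_
    rw [hE, mul_assoc, Matrix.mul_apply, Finset.sum_eq_single i]
    · simp
    · intro b _ hb
      rw [Matrix.single_mul_apply_of_ne (c := (1 : ℂ)) i k b l hb, mul_zero]
    · simp
  have hcard : (Fintype.card G : ℂ) ≠ 0 := Nat.cast_ne_zero.mpr Fintype.card_ne_zero
  have hnne : (n : ℂ) ≠ 0 := Nat.cast_ne_zero.mpr hn.ne'
  rw [← hMjl, hMscalar]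
  simp only [Matrix.smul_apply, Matrix.one_apply, smul_eq_mul]
  rcases eq_or_ne j l with rfl | hjl
  · have hμ2 : μ = (Fintype.card G : ℂ) * (if i = k then 1 else 0) / n := by
      rw [eq_div_iff hnne, hμval]
    rw [if_pos rfl, hμ2, mul_one]
    field_simp
  · simp [hjl]
end
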